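/- arXiv:math/0506296 — 3 statements merged into one kernel-verified Lean document; each statement's English description precedes it below -/
import Mathlib

section
/- Let n and α be positive integers and s > 0 a real number. The function v ↦ v^{-n/α} · exp(-s/(2 v^{2/α})) on (0, ∞) attains its maximum at the unique point v = (s/n)^{α/2}; equivalently, the maximizer satisfies v^{2/α} = s/n for every α. (Thus the invariant MAP estimate, in which Jeffreys' prior cancels against the underlying metric measure, gives the same estimate of σ² = v^{2/α} in every parameterization.) -/
open Real

/-- Key one-variable lemma: `t ↦ t^(-m) * exp(-s/(2t))` on `(0,∞)` is maximized
uniquely at `t = s/(2m)`. -/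
lemma map_key (m s t : ℝ) (hm : 0 < m) (hs : 0 < s) (ht : 0 < t) :
    t ^ (-m) * Real.exp (-s / (2 * t)) ≤ (s / (2 * m)) ^ (-m) * Real.exp (-m) ∧
    (t ^ (-m) * Real.exp (-s / (2 * t)) = (s / (2 * m)) ^ (-m) * Real.exp (-m) →
      t = s / (2 * m)) := by
  set t0 : ℝ := s / (2 * m) with ht0def
  have ht0 : 0 < t0 := by positivity
  set x : ℝ := t0 / t with hxdef
  have hx : 0 < x := by positivity
  have hst : -s / (2 * t) = -(m * x) := by
    rw [hxdef, ht0def]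
    field_simp
  have hL : t ^ (-m) * Real.exp (-s / (2 * t)) =
      Real.exp (Real.log t * -m + -(m * x)) := by
    rw [Real.exp_add, Real.rpow_def_of_pos ht, hst]
  have hR : t0 ^ (-m) * Real.exp (-m) =
      Real.exp (Real.log t0 * -m + -m) := by
    rw [Real.exp_add, Real.rpow_def_of_pos ht0]
  have hlogx : Real.log t0 - Real.log t = Real.log x := by
    rw [hxdef, Real.log_div (ne_of_gt ht0) (ne_of_gt ht)]
  constructor
  · rw [hL, hR]
    apply Real.exp_le_exp.2
    have h := Real.log_le_sub_one_of_pos hx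
    nlinarith [hlogx]
  · intro heq
    rw [hL, hR] at heq
    have h2 := Real.exp_injective heq
    by_contra hne
    have hxne : x ≠ 1 := by
      intro h1
      apply hne
      rw [hxdef, div_eq_one_iff_eq (ne_of_gt ht)] at h1
      linarith [h1]
    have := Real.log_lt_sub_one_of_pos hx hxne
    nlinarith [hlogx]

/-- The invariant MAP estimate: the function `v ↦ v^{-n/α} · exp(-s/(2 v^{2/α}))` on
`(0, ∞)` attains its maximum at the unique point `v = (s/n)^{α/2}`; equivalently, the
maximizer satisfies `v^{2/α} = s/n` for every `α`. -/
theorem invariant_map_estimate_variance (n α : ℕ) (hn : 0 < n) (hα : 0 < α)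
    (s : ℝ) (hs : 0 < s) :
    (∀ v : ℝ, 0 < v →
      (v ^ (-(n : ℝ) / α) * Real.exp (-s / (2 * v ^ ((2 : ℝ) / α))) ≤
        ((s / n) ^ ((α : ℝ) / 2)) ^ (-(n : ℝ) / α) *
          Real.exp (-s / (2 * ((s / n) ^ ((α : ℝ) / 2)) ^ ((2 : ℝ) / α)))) ∧
      (v ^ (-(n : ℝ) / α) * Real.exp (-s / (2 * v ^ ((2 : ℝ) / α))) =
        ((s / n) ^ ((α : ℝ) / 2)) ^ (-(n : ℝ) / α) *
          Real.exp (-s / (2 * ((s / n) ^ ((α : ℝ) / 2)) ^ ((2 : ℝ) / α))) →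
        v = (s / n) ^ ((α : ℝ) / 2))) ∧
    ((s / n) ^ ((α : ℝ) / 2)) ^ ((2 : ℝ) / α) = s / n := by
  have hnR : (0 : ℝ) < (n : ℝ) := by exact_mod_cast hn
  have hαR : (0 : ℝ) < (α : ℝ) := by exact_mod_cast hα
  have hsn : (0 : ℝ) < s / n := div_pos hs hnR
  have hm : (0 : ℝ) < (n : ℝ) / 2 := by positivity
  set t0 : ℝ := (s / n) ^ ((α : ℝ) / 2) with ht0def
  have ht0 : 0 < t0 := Real.rpow_pos_of_pos hsn _
  have hkey2 : t0 ^ ((2 : ℝ) / α) = s / n := by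
    rw [ht0def, ← Real.rpow_mul hsn.le]
    rw [show (α : ℝ) / 2 * (2 / α) = 1 by field_simp]
    exact Real.rpow_one _
  refine ⟨fun v hv => ?_, hkey2⟩
  have hvα : 0 < v ^ ((2 : ℝ) / α) := Real.rpow_pos_of_pos hv _
  have hpow : ∀ w : ℝ, 0 < w →
      w ^ (-(n : ℝ) / α) = (w ^ ((2 : ℝ) / α)) ^ (-((n : ℝ) / 2)) := by
    intro w hw
    rw [← Real.rpow_mul hw.le]
    congr 1
    field_simp
  have hsn2 : s / (2 * ((n : ℝ) / 2)) = s / n := by field_simp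
  have hexpm : -s / (2 * (s / n)) = -((n : ℝ) / 2) := by field_simp
  obtain ⟨hle, huniq⟩ := map_key ((n : ℝ) / 2) s (v ^ ((2 : ℝ) / α)) hm hs hvα
  rw [hsn2] at hle huniq
  constructor
  · rw [hpow v hv, hpow t0 ht0, hkey2, hexpm]
    exact hle
  · intro heq
    rw [hpow v hv, hpow t0 ht0, hkey2, hexpm] at heq
    have hvt : v ^ ((2 : ℝ) / α) = s / n := by
      exact huniq heq
    have : v = (v ^ ((2 : ℝ) / α)) ^ ((α : ℝ) / 2) := by
      rw [← Real.rpow_mul hv.le]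
      rw [show (2 : ℝ) / α * (α / 2) = 1 by field_simp]
      exact (Real.rpow_one _).symm
    rw [this, hvt, ht0def]
end

section
/- Let n be a positive integer and s > 0. Then the ratio ∫₀^∞ σ^{-(n+1)} · exp(-s/(2σ²)) · ln σ dσ / ∫₀^∞ σ^{-(n+1)} · exp(-s/(2σ²)) dσ equals (1/2) · [ln(s/2) - ψ(n/2)], where ψ(z) = Γ'(z)/Γ(z) is the digamma function. (That is, the posterior expectation of ln σ under Jeffreys' prior is (1/2)[ln(s/2) - ψ(n/2)].) -/
open Real MeasureTheory

section Aux
open Set Filter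

lemma mellin_pack {z : ℝ} (hz : 0 < z) :
    MellinConvergent (fun t => Real.log t • ((Real.exp (-t) : ℝ) : ℂ)) (z : ℂ) ∧
      HasDerivAt (mellin fun x : ℝ => ((Real.exp (-x) : ℝ) : ℂ))
        (mellin (fun t => Real.log t • ((Real.exp (-t) : ℝ) : ℂ)) (z : ℂ)) (z : ℂ) := by
  refine mellin_hasDerivAt_of_isBigO_rpow (a := z + 1) (b := 0) ?_ ?_ ?_ ?_ ?_
  · refine (Continuous.continuousOn ?_).locallyIntegrableOn measurableSet_Ioi
    exact Complex.continuous_ofReal.comp (Real.continuous_exp.comp continuous_neg)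
  · rw [← Asymptotics.isBigO_norm_left]
    simp_rw [Complex.norm_real,
      Asymptotics.isBigO_norm_left]
    have := (isLittleO_exp_neg_mul_rpow_atTop zero_lt_one (-(z+1))).isBigO
    simpa only [neg_one_mul] using this
  · simpa using lt_add_one z
  · simp_rw [neg_zero, Real.rpow_zero]
    refine Asymptotics.isBigO_const_of_tendsto (?_ : Tendsto _ _ (nhds (1 : ℂ))) one_ne_zero
    rw [(by simp : (1 : ℂ) = Real.exp (-0))]
    exact (Complex.continuous_ofReal.comp
      (Real.continuous_exp.comp continuous_neg)).continuousWithinAt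
  · simpa using hz

lemma integrableOn_rpow_exp_log {z : ℝ} (hz : 0 < z) :
    IntegrableOn (fun t : ℝ => t ^ (z - 1) * Real.exp (-t) * Real.log t) (Ioi 0) := by
  have h := (mellin_pack hz).1
  unfold MellinConvergent at h
  have h2 : IntegrableOn
      (fun t : ℝ => ((t ^ (z - 1) * Real.exp (-t) * Real.log t : ℝ) : ℂ)) (Ioi 0) := by
    refine h.congr_fun (fun t ht => ?_) measurableSet_Ioi
    have ht0 : (0:ℝ) ≤ t := (mem_Ioi.mp ht).le
    simp only [smul_eq_mul, Complex.real_smul]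
    rw [show ((z:ℂ) - 1) = ((z - 1 : ℝ) : ℂ) by push_cast; ring,
      ← Complex.ofReal_cpow ht0]
    push_cast
    ring
  have h3 := h2.re
  simp only [RCLike.re_to_complex, Complex.ofReal_re] at h3; exact h3

lemma deriv_Gamma_eq {z : ℝ} (hz : 0 < z) :
    deriv Real.Gamma z = ∫ t in Ioi (0:ℝ), t ^ (z - 1) * Real.exp (-t) * Real.log t := by
  set D : ℂ := ∫ t : ℝ in Ioi 0, (t : ℂ) ^ ((z:ℂ) - 1) * (Real.log t * Real.exp (-t)) with hDdef
  have hD : HasDerivAt Complex.GammaIntegral D (z:ℂ) :=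
    Complex.hasDerivAt_GammaIntegral (by simpa using hz)
  have hev : Complex.Gamma =ᶠ[nhds (z:ℂ)] Complex.GammaIntegral := by
    have hopen : IsOpen {w : ℂ | 0 < w.re} :=
      Complex.continuous_re.isOpen_preimage _ isOpen_Ioi
    filter_upwards [hopen.mem_nhds (by simpa using hz)] with w hw
    exact Complex.Gamma_eq_integral hw
  have hG : HasDerivAt Complex.Gamma D (z:ℂ) := hD.congr_of_eventuallyEq hev
  have hR : HasDerivAt (fun x : ℝ => (Complex.Gamma x).re) D.re z := hG.real_of_complex
  have hRG : HasDerivAt Real.Gamma D.re z := hR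
  rw [hRG.deriv]
  have hcoe : (∫ t in Ioi (0:ℝ), ((t ^ (z - 1) * Real.exp (-t) * Real.log t : ℝ) : ℂ)) =
      ((∫ t in Ioi (0:ℝ), t ^ (z - 1) * Real.exp (-t) * Real.log t : ℝ) : ℂ) :=
    integral_ofReal
  have hDre : D = ((∫ t in Ioi (0:ℝ), t ^ (z - 1) * Real.exp (-t) * Real.log t : ℝ) : ℂ) := by
    rw [hDdef, ← hcoe]
    refine setIntegral_congr_fun measurableSet_Ioi (fun t ht => ?_)
    have ht0 : (0:ℝ) ≤ t := (mem_Ioi.mp ht).le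
    rw [show ((z:ℂ) - 1) = ((z - 1 : ℝ) : ℂ) by push_cast; ring,
      ← Complex.ofReal_cpow ht0]
    push_cast
    ring
  rw [hDre, Complex.ofReal_re]

lemma key {z c : ℝ} (hc : 0 < c) (h : ℝ → ℝ) :
    (∫ t in Ioi (0:ℝ), t ^ (z - 1) * Real.exp (-t) * h t) =
      (2 * c ^ z) * ∫ σ in Ioi (0:ℝ),
        σ ^ (-(2 * z + 1)) * Real.exp (-c / σ ^ 2) * h (c / σ ^ 2) := by
  set g : ℝ → ℝ := fun t => t ^ (z - 1) * Real.exp (-t) * h t with hg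
  have s1 : (∫ x in Ioi (0:ℝ), g (c * x)) = c⁻¹ • ∫ t in Ioi (0:ℝ), g t := by
    simpa using integral_comp_mul_left_Ioi g 0 hc
  have s2 : (∫ x in Ioi (0:ℝ), (|(-2:ℝ)| * x ^ ((-2:ℝ) - 1)) • g (c * x ^ (-2:ℝ)))
      = ∫ u in Ioi (0:ℝ), g (c * u) :=
    integral_comp_rpow_Ioi (fun u => g (c * u)) (by norm_num)
  have s3 : (∫ x in Ioi (0:ℝ), (|(-2:ℝ)| * x ^ ((-2:ℝ) - 1)) • g (c * x ^ (-2:ℝ)))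
      = ∫ x in Ioi (0:ℝ), (2 * c ^ z * c⁻¹) *
          (x ^ (-(2 * z + 1)) * Real.exp (-c / x ^ 2) * h (c / x ^ 2)) := by
    refine setIntegral_congr_fun measurableSet_Ioi (fun x hx => ?_)
    have hx0 : (0:ℝ) < x := hx
    have hx2 : x ^ (-2:ℝ) = (x ^ 2)⁻¹ := by
      rw [show (-2:ℝ) = -((2:ℕ):ℝ) by norm_num, rpow_neg hx0.le, rpow_natCast]
    have hcx : c * x ^ (-2:ℝ) = c / x ^ 2 := by rw [hx2]; ring
    have hx2pos : (0:ℝ) < x ^ 2 := by positivity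
    have hpow : (c / x ^ 2) ^ (z - 1) = c ^ (z - 1) * x ^ (-(2 * (z - 1))) := by
      rw [div_rpow hc.le hx2pos.le, ← rpow_natCast x 2, ← rpow_mul hx0.le,
        rpow_neg hx0.le, div_eq_mul_inv]
      norm_num
    rw [smul_eq_mul, hg, hcx]
    dsimp only
    rw [hpow, show c ^ (z - 1) = c ^ z * c⁻¹ by rw [rpow_sub hc, rpow_one]; ring,
      show |(-2:ℝ)| = 2 by norm_num, show ((-2:ℝ) - 1) = (-3:ℝ) by norm_num,
      show x ^ (-(2 * z + 1)) = x ^ (-3:ℝ) * x ^ (-(2 * (z - 1))) by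
        rw [← rpow_add hx0]; ring_nf]
    ring
  have s4 : (∫ x in Ioi (0:ℝ), (2 * c ^ z * c⁻¹) *
        (x ^ (-(2 * z + 1)) * Real.exp (-c / x ^ 2) * h (c / x ^ 2)))
      = (2 * c ^ z * c⁻¹) * ∫ x in Ioi (0:ℝ),
          x ^ (-(2 * z + 1)) * Real.exp (-c / x ^ 2) * h (c / x ^ 2) :=
    integral_const_mul _ _
  have main : c⁻¹ * (∫ t in Ioi (0:ℝ), g t)
      = c⁻¹ * ((2 * c ^ z) * ∫ x in Ioi (0:ℝ),
          x ^ (-(2 * z + 1)) * Real.exp (-c / x ^ 2) * h (c / x ^ 2)) := by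
    have := s2.symm.trans s3
    rw [s1, s4] at this
    rw [smul_eq_mul] at this
    rw [this]; ring
  exact mul_left_cancel₀ (inv_ne_zero hc.ne') main

end Aux

open Set Filter

/-- The digamma function `ψ(z) = Γ'(z)/Γ(z)`, the logarithmic derivative of the
Gamma function. -/
noncomputable def digamma (z : ℝ) : ℝ := deriv Real.Gamma z / Real.Gamma z

/-- The posterior expectation of `ln σ` under Jeffreys' prior is
`(1/2)[ln(s/2) - ψ(n/2)]`. -/
theorem posterior_expectation_log_sigma (n : ℕ) (hn : 0 < n) (s : ℝ) (hs : 0 < s) :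
    (∫ σ in Set.Ioi (0 : ℝ),
        σ ^ (-((n : ℝ) + 1)) * Real.exp (-s / (2 * σ ^ 2)) * Real.log σ) /
      (∫ σ in Set.Ioi (0 : ℝ), σ ^ (-((n : ℝ) + 1)) * Real.exp (-s / (2 * σ ^ 2))) =
      (1 / 2) * (Real.log (s / 2) - digamma ((n : ℝ) / 2)) := by
  have hn0 : (0:ℝ) < (n:ℝ) := by exact_mod_cast hn
  set z : ℝ := (n:ℝ) / 2 with hzdef
  have hz : 0 < z := by positivity
  set c : ℝ := s / 2 with hcdef
  have hc : 0 < c := by positivity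
  have hexp : ∀ σ : ℝ, -((n:ℝ) + 1) = -(2 * z + 1) ∧ -s / (2 * σ ^ 2) = -c / σ ^ 2 := by
    intro σ
    constructor
    · rw [hzdef]; ring
    · rw [hcdef]; ring
  -- denominator
  have hden : (∫ σ in Set.Ioi (0:ℝ), σ ^ (-((n:ℝ) + 1)) * Real.exp (-s / (2 * σ ^ 2)))
      = ∫ σ in Ioi (0:ℝ), σ ^ (-(2 * z + 1)) * Real.exp (-c / σ ^ 2)
          * (fun _ : ℝ => (1:ℝ)) (c / σ ^ 2) := by
    refine setIntegral_congr_fun measurableSet_Ioi (fun σ hσ => ?_)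
    rw [(hexp σ).1, (hexp σ).2]; simp
  -- numerator
  have hnum : (∫ σ in Set.Ioi (0:ℝ),
        σ ^ (-((n:ℝ) + 1)) * Real.exp (-s / (2 * σ ^ 2)) * Real.log σ)
      = ∫ σ in Ioi (0:ℝ), σ ^ (-(2 * z + 1)) * Real.exp (-c / σ ^ 2)
          * (fun t : ℝ => (1/2) * (Real.log c - Real.log t)) (c / σ ^ 2) := by
    refine setIntegral_congr_fun measurableSet_Ioi (fun σ hσ => ?_)
    have hσ0 : (0:ℝ) < σ := hσ
    have hσ2 : (σ:ℝ) ^ 2 ≠ 0 := by positivity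
    have hlog : Real.log (c / σ ^ 2) = Real.log c - 2 * Real.log σ := by
      rw [Real.log_div hc.ne' hσ2, Real.log_pow]
      push_cast; ring
    rw [(hexp σ).1, (hexp σ).2]
    dsimp only
    rw [hlog]
    ring
  -- Gamma as integral in our normal form
  have hGammaInt : (∫ t in Ioi (0:ℝ), t ^ (z - 1) * Real.exp (-t)
        * (fun _ : ℝ => (1:ℝ)) t) = Real.Gamma z := by
    rw [Real.Gamma_eq_integral hz]
    exact setIntegral_congr_fun measurableSet_Ioi (fun t ht => by ring)
  have e0 := key (z := z) hc (fun _ => (1:ℝ))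
  rw [hGammaInt] at e0
  -- split the numerator-side t-integral
  have hint1 : IntegrableOn (fun t : ℝ => t ^ (z - 1) * Real.exp (-t)) (Ioi 0) :=
    (Real.GammaIntegral_convergent hz).congr_fun (fun t ht => by ring) measurableSet_Ioi
  have hint2 := integrableOn_rpow_exp_log hz
  have hsplit : (∫ t in Ioi (0:ℝ), t ^ (z - 1) * Real.exp (-t)
        * (fun t : ℝ => (1/2) * (Real.log c - Real.log t)) t)
      = (1/2) * Real.log c * Real.Gamma z - (1/2) * deriv Real.Gamma z := by
    have hfun : (fun t : ℝ => t ^ (z - 1) * Real.exp (-t)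
          * ((1/2) * (Real.log c - Real.log t)))
        = fun t : ℝ => ((1/2) * Real.log c) * (t ^ (z - 1) * Real.exp (-t))
            - (1/2) * (t ^ (z - 1) * Real.exp (-t) * Real.log t) := by
      funext t; ring
    dsimp only
    rw [hfun, integral_sub (hint1.const_mul _) (hint2.const_mul _),
      integral_const_mul, integral_const_mul, deriv_Gamma_eq hz]
    have : (∫ t in Ioi (0:ℝ), t ^ (z - 1) * Real.exp (-t)) = Real.Gamma z := by
      rw [Real.Gamma_eq_integral hz]
      exact setIntegral_congr_fun measurableSet_Ioi (fun t ht => by ring)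
    rw [this]
  have e1 := key (z := z) hc (fun t : ℝ => (1/2) * (Real.log c - Real.log t))
  rw [hsplit] at e1
  -- conclude
  have h2cz : (0:ℝ) < 2 * c ^ z := by positivity
  have hG : 0 < Real.Gamma z := Real.Gamma_pos_of_pos hz
  have hI0' := eq_div_of_mul_eq h2cz.ne' ((mul_comm _ _).trans e0.symm)
  have hI1' := eq_div_of_mul_eq h2cz.ne' ((mul_comm _ _).trans e1.symm)
  rw [hnum, hden, hI0', hI1', digamma, div_div_div_comm]
  rw [div_self h2cz.ne', div_one]
  field_simp
end

section
/- Let n be a positive integer and s > 0. The function σ ↦ ∫₀^∞ σ'^{-(n+1)} · exp(-s/(2σ'²)) · (ln σ - ln σ')² dσ' on (0, ∞) attains its minimum at the unique point σ̂ = √(s/2) · e^{-ψ(n/2)/2}, where ψ(z) = Γ'(z)/Γ(z) is the digamma function. (This is the invariant MMSD estimate of the standard deviation of a zero-mean Gaussian under Jeffreys' prior.) -/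
open Real MeasureTheory
open Set

lemma aux_cont (c : ℝ) (k : ℕ) :
    ContinuousOn (fun u : ℝ => u ^ (c - 1) * Real.exp (-u) * Real.log u ^ k) (Ioi 0) := by
  apply ContinuousOn.mul
  · apply ContinuousOn.mul
    · exact fun x hx => (Real.continuousAt_rpow_const x _ (Or.inl (ne_of_gt hx))).continuousWithinAt
    · exact (Real.continuous_exp.comp continuous_neg).continuousOn
  · exact ((Real.continuousOn_log.mono (fun x hx => ne_of_gt hx)).pow k)

lemma aux_log_bound {c u : ℝ} (hc : 0 < c) (hu0 : 0 < u) (hu1 : u ≤ 1) :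
    |Real.log u| ≤ (4 / c) * u ^ (-(c / 4)) := by
  have hrp : (0:ℝ) < u ^ (-(c/4)) := Real.rpow_pos_of_pos hu0 _
  have h1 : Real.log (u ^ (-(c/4))) ≤ u ^ (-(c/4)) := by
    have := Real.log_le_sub_one_of_pos hrp; linarith
  have h2 : Real.log (u ^ (-(c/4))) = -(c/4) * Real.log u := Real.log_rpow hu0 _
  rw [abs_of_nonpos (Real.log_nonpos hu0.le hu1)]
  rw [h2] at h1
  have h4 : -Real.log u = (4/c) * (-(c/4) * Real.log u) := by field_simp
  rw [h4]
  have : (0:ℝ) < 4 / c := by positivity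
  nlinarith

lemma aux_int2 {c : ℝ} (hc : 0 < c) :
    IntegrableOn (fun u : ℝ => u ^ (c - 1) * Real.exp (-u) * Real.log u ^ 2) (Ioi 0) := by
  have h01 : IntegrableOn (fun u : ℝ => u ^ (c - 1) * Real.exp (-u) * Real.log u ^ 2) (Ioc 0 1) := by
    have hint : IntegrableOn (fun u : ℝ => (4 / c) ^ 2 * u ^ (c / 2 - 1)) (Ioc 0 1) := by
      have := (intervalIntegral.intervalIntegrable_rpow' (a := (0:ℝ)) (b := 1)
        (r := c / 2 - 1) (by linarith)).const_mul ((4 / c) ^ 2)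
      rwa [intervalIntegrable_iff_integrableOn_Ioc_of_le (by norm_num)] at this
    refine Integrable.mono hint (((aux_cont c 2).mono Ioc_subset_Ioi_self).aestronglyMeasurable
      measurableSet_Ioc) ?_
    filter_upwards [ae_restrict_mem measurableSet_Ioc] with u hu
    obtain ⟨hu0, hu1⟩ := hu
    have hb := aux_log_bound hc hu0 hu1
    have hrp : (0:ℝ) < u ^ (-(c/4)) := Real.rpow_pos_of_pos hu0 _
    have hrc : (0:ℝ) < u ^ (c - 1) := Real.rpow_pos_of_pos hu0 _
    have he : Real.exp (-u) ≤ 1 := Real.exp_le_one_iff.2 (by linarith)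
    have habs : |Real.log u| ^ 2 ≤ (4/c)^2 * (u ^ (-(c/4)))^2 := by
      rw [← mul_pow]; exact pow_le_pow_left₀ (abs_nonneg _) hb 2
    have hsq : (u ^ (-(c/4)))^2 = u ^ (-(c/2)) := by
      rw [← Real.rpow_natCast (u ^ (-(c/4))) 2, ← Real.rpow_mul hu0.le]; norm_num; congr 1; ring
    have hkey : u ^ (c - 1) * u ^ (-(c/2)) = u ^ (c/2 - 1) := by
      rw [← Real.rpow_add hu0]; congr 1; ring
    rw [Real.norm_eq_abs, Real.norm_eq_abs, abs_mul, abs_mul, abs_of_pos hrc,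
      abs_of_pos (Real.exp_pos _), abs_of_nonneg (by positivity : (0:ℝ) ≤ (4/c)^2 * u ^ (c/2-1)),
      abs_pow]
    calc u ^ (c-1) * Real.exp (-u) * |Real.log u| ^ 2
        ≤ u ^ (c-1) * 1 * ((4/c)^2 * (u ^ (-(c/4)))^2) := by
          apply mul_le_mul (by nlinarith [abs_nonneg (Real.log u)]) habs (by positivity) (by positivity)
      _ = (4/c)^2 * u ^ (c/2 - 1) := by rw [hsq, ← hkey]; ring
  have h1i : IntegrableOn (fun u : ℝ => u ^ (c - 1) * Real.exp (-u) * Real.log u ^ 2) (Ioi 1) := by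
    have hint : IntegrableOn (fun u : ℝ => Real.exp (-u) * u ^ (c + 2 - 1)) (Ioi 1) :=
      (Real.GammaIntegral_convergent (by linarith : (0:ℝ) < c + 2)).mono_set
        (Ioi_subset_Ioi zero_le_one)
    refine Integrable.mono hint (((aux_cont c 2).mono (Ioi_subset_Ioi zero_le_one)).aestronglyMeasurable
      measurableSet_Ioi) ?_
    filter_upwards [ae_restrict_mem measurableSet_Ioi] with u hu
    have hu1 : (1:ℝ) < u := hu
    have hu0 : (0:ℝ) < u := by linarith
    have hlog : |Real.log u| ≤ u := by
      rw [abs_of_nonneg (Real.log_nonneg hu1.le)]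
      have := Real.log_le_sub_one_of_pos hu0; linarith
    have hsq : |Real.log u| ^ 2 ≤ u ^ 2 := by nlinarith [abs_nonneg (Real.log u)]
    have hkey : u ^ (c - 1) * u ^ (2:ℕ) = u ^ (c + 2 - 1) := by
      rw [← Real.rpow_natCast u 2, ← Real.rpow_add hu0]; norm_num; congr 1; ring
    rw [Real.norm_eq_abs, Real.norm_eq_abs, abs_mul, abs_mul,
      abs_of_pos (Real.rpow_pos_of_pos hu0 _), abs_of_pos (Real.exp_pos _),
      abs_of_nonneg (by positivity : (0:ℝ) ≤ Real.exp (-u) * u ^ (c+2-1)), abs_pow]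
    calc u ^ (c-1) * Real.exp (-u) * |Real.log u| ^ 2
        ≤ u ^ (c-1) * Real.exp (-u) * u ^ 2 := by
          apply mul_le_mul_of_nonneg_left hsq (by positivity)
      _ = Real.exp (-u) * (u ^ (c-1) * u ^ (2:ℕ)) := by push_cast; ring
      _ = Real.exp (-u) * u ^ (c + 2 - 1) := by rw [hkey]
  have : (Ioi (0:ℝ)) = Ioc 0 1 ∪ Ioi 1 := (Ioc_union_Ioi_eq_Ioi zero_le_one).symm
  rw [this]
  exact h01.union h1i

lemma aux_int0 {c : ℝ} (hc : 0 < c) :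
    IntegrableOn (fun u : ℝ => u ^ (c - 1) * Real.exp (-u)) (Ioi 0) := by
  simpa [mul_comm] using Real.GammaIntegral_convergent hc

lemma aux_int1 {c : ℝ} (hc : 0 < c) :
    IntegrableOn (fun u : ℝ => u ^ (c - 1) * Real.exp (-u) * Real.log u) (Ioi 0) := by
  refine Integrable.mono ((aux_int0 hc).add (aux_int2 hc))
    (((aux_cont c 1).aestronglyMeasurable measurableSet_Ioi).congr ?_) ?_
  · exact Filter.EventuallyEq.of_eq (by funext u; simp)
  · filter_upwards [ae_restrict_mem measurableSet_Ioi] with u hu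
    have hu0 : (0:ℝ) < u := hu
    have h1 : |Real.log u| ≤ 1 + Real.log u ^ 2 := by nlinarith [abs_nonneg (Real.log u), sq_abs (Real.log u)]
    have hp : (0:ℝ) < u ^ (c-1) * Real.exp (-u) := by positivity
    rw [Real.norm_eq_abs, Real.norm_eq_abs, abs_mul, abs_of_pos hp]
    calc u ^ (c-1) * Real.exp (-u) * |Real.log u|
        ≤ u ^ (c-1) * Real.exp (-u) * (1 + Real.log u ^ 2) := by
          exact mul_le_mul_of_nonneg_left h1 hp.le
      _ = u ^ (c-1) * Real.exp (-u) + u ^ (c-1) * Real.exp (-u) * Real.log u ^ 2 := by ring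
      _ ≤ |u ^ (c-1) * Real.exp (-u) + u ^ (c-1) * Real.exp (-u) * Real.log u ^ 2| := le_abs_self _

lemma aux_hasDerivAt_Gamma {c : ℝ} (hc : 0 < c) :
    HasDerivAt Real.Gamma (∫ u in Ioi 0, u ^ (c - 1) * Real.exp (-u) * Real.log u) c := by
  have h0 : (0:ℝ) < (c : ℂ).re := by simpa using hc
  have h1 := Complex.hasDerivAt_GammaIntegral h0
  have hev : Complex.Gamma =ᶠ[nhds (c:ℂ)] Complex.GammaIntegral := by
    have hm : {z : ℂ | 0 < z.re} ∈ nhds (c:ℂ) :=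
      (isOpen_lt continuous_const Complex.continuous_re).mem_nhds h0
    filter_upwards [hm] with z hz using Complex.Gamma_eq_integral hz
  have h2 : HasDerivAt Complex.Gamma
      (∫ t : ℝ in Ioi 0, (t:ℂ) ^ ((c:ℂ) - 1) * (Real.log t * Real.exp (-t))) c :=
    h1.congr_of_eventuallyEq hev
  have hD : (∫ t : ℝ in Ioi 0, (t:ℂ) ^ ((c:ℂ) - 1) * (Real.log t * Real.exp (-t)))
      = ((∫ u in Ioi 0, u ^ (c - 1) * Real.exp (-u) * Real.log u : ℝ) : ℂ) := by
    rw [show ((∫ u in Ioi 0, u ^ (c - 1) * Real.exp (-u) * Real.log u : ℝ) : ℂ)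
        = ∫ u in Ioi 0, ((u ^ (c - 1) * Real.exp (-u) * Real.log u : ℝ) : ℂ) from
      (integral_ofReal (𝕜 := ℂ)).symm]
    refine setIntegral_congr_fun measurableSet_Ioi fun t ht => ?_
    have ht0 : (0:ℝ) < t := ht
    rw [show ((c:ℂ) - 1) = ((c - 1 : ℝ) : ℂ) by push_cast; ring,
      ← Complex.ofReal_cpow ht0.le]
    push_cast
    ring
  rw [hD] at h2
  have h3 := h2.real_of_complex
  exact (by simpa only [Complex.ofReal_re] using h3 : HasDerivAt (fun x : ℝ => (Complex.Gamma (x:ℂ)).re)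
    (∫ u in Ioi 0, u ^ (c - 1) * Real.exp (-u) * Real.log u) c)

lemma aux_I_eval {c : ℝ} (hc : 0 < c) (τ : ℝ) :
    ∫ u in Ioi (0:ℝ), u ^ (c-1) * Real.exp (-u) * (τ + Real.log u / 2) ^ 2
      = (∫ u in Ioi (0:ℝ), u ^ (c-1) * Real.exp (-u)) * τ^2
        + (∫ u in Ioi (0:ℝ), u ^ (c-1) * Real.exp (-u) * Real.log u) * τ
        + (∫ u in Ioi (0:ℝ), u ^ (c-1) * Real.exp (-u) * Real.log u ^ 2) / 4 := by
  have h0 := aux_int0 hc; have h1 := aux_int1 hc; have h2 := aux_int2 hc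
  have key : (fun u : ℝ => u ^ (c-1) * Real.exp (-u) * (τ + Real.log u / 2) ^ 2)
      = fun u => τ^2 * (u ^ (c-1) * Real.exp (-u))
          + (τ * (u ^ (c-1) * Real.exp (-u) * Real.log u)
            + (1/4) * (u ^ (c-1) * Real.exp (-u) * Real.log u ^ 2)) := by
    funext u; ring
  have i1 : Integrable (fun u : ℝ => τ * (u ^ (c-1) * Real.exp (-u) * Real.log u))
      (volume.restrict (Ioi 0)) := h1.const_mul _
  have i2 : Integrable (fun u : ℝ => (1/4) * (u ^ (c-1) * Real.exp (-u) * Real.log u ^ 2))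
      (volume.restrict (Ioi 0)) := h2.const_mul _
  have i12 : Integrable (fun u : ℝ => τ * (u ^ (c-1) * Real.exp (-u) * Real.log u)
      + (1/4) * (u ^ (c-1) * Real.exp (-u) * Real.log u ^ 2)) (volume.restrict (Ioi 0)) := i1.add i2
  rw [key, integral_add (h0.const_mul (τ^2)) i12, integral_add i1 i2,
    integral_const_mul, integral_const_mul, integral_const_mul]
  ring

lemma aux_subst (n : ℕ) (s : ℝ) (hs : 0 < s) (t : ℝ) :
    (∫ σ in Ioi (0:ℝ), σ ^ (-((n : ℝ) + 1)) * Real.exp (-s / (2 * σ ^ 2)) * (t - Real.log σ) ^ 2)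
      = (1/2) * (s/2) ^ (-((n:ℝ)/2)) *
        ∫ u in Ioi (0:ℝ), u ^ ((n:ℝ)/2 - 1) * Real.exp (-u) *
          ((t - Real.log (s/2) / 2) + Real.log u / 2) ^ 2 := by
  set a : ℝ := s/2 with ha_def
  have ha : 0 < a := by positivity
  set c : ℝ := (n:ℝ)/2 with hc_def
  set f : ℝ → ℝ := fun y => y ^ (c - 1) * Real.exp (-(a * y)) * (t + Real.log y / 2) ^ 2 with hf
  have stepA : (∫ σ in Ioi (0:ℝ), σ ^ (-((n : ℝ) + 1)) * Real.exp (-s / (2 * σ ^ 2))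
        * (t - Real.log σ) ^ 2)
      = ∫ σ in Ioi (0:ℝ), (1/2) * ((|(-2:ℝ)| * σ ^ ((-2:ℝ) - 1)) • f (σ ^ (-2:ℝ))) := by
    refine setIntegral_congr_fun measurableSet_Ioi fun σ hσ => ?_
    have hσ0 : (0:ℝ) < σ := hσ
    have e1 : σ ^ (-2:ℝ) = (σ ^ 2)⁻¹ := by
      rw [Real.rpow_neg hσ0.le, ← Real.rpow_natCast σ 2]; norm_num
    have e2 : Real.log (σ ^ (-2:ℝ)) = -2 * Real.log σ := Real.log_rpow hσ0 _
    have e3 : (σ ^ (-2:ℝ)) ^ (c - 1) = σ ^ ((-2:ℝ) * (c - 1)) := (Real.rpow_mul hσ0.le _ _).symm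
    have e4 : -(a * σ ^ (-2:ℝ)) = -s / (2 * σ ^ 2) := by
      rw [e1, ha_def]; field_simp
    have e5 : σ ^ ((-2:ℝ) - 1) * σ ^ ((-2:ℝ) * (c - 1)) = σ ^ (-((n:ℝ) + 1)) := by
      rw [← Real.rpow_add hσ0]; congr 1; rw [hc_def]; push_cast; ring
    simp only [hf, e2, e3, e4, abs_of_nonpos (by norm_num : (-2:ℝ) ≤ 0), smul_eq_mul]
    rw [← e5]
    ring_nf
  have stepB : (∫ σ in Ioi (0:ℝ), (|(-2:ℝ)| * σ ^ ((-2:ℝ) - 1)) • f (σ ^ (-2:ℝ)))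
      = ∫ y in Ioi (0:ℝ), f y := integral_comp_rpow_Ioi f (by norm_num)
  have stepC : (∫ y in Ioi (0:ℝ), f y) = a⁻¹ * ∫ x in Ioi (0:ℝ), f (a⁻¹ * x) := by
    rw [integral_comp_mul_left_Ioi f 0 (inv_pos.2 ha)]
    simp only [inv_inv, smul_eq_mul, mul_zero]
    rw [← mul_assoc, inv_mul_cancel₀ ha.ne', one_mul]
  have stepD : (∫ x in Ioi (0:ℝ), f (a⁻¹ * x))
      = a ^ ((1:ℝ) - c) * ∫ u in Ioi (0:ℝ), u ^ (c - 1) * Real.exp (-u) *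
          ((t - Real.log a / 2) + Real.log u / 2) ^ 2 := by
    rw [← integral_const_mul]
    refine setIntegral_congr_fun measurableSet_Ioi fun x hx => ?_
    have hx0 : (0:ℝ) < x := hx
    have e1 : (a⁻¹ * x) ^ (c - 1) = a ^ (-(c-1)) * x ^ (c - 1) := by
      rw [Real.mul_rpow (by positivity) hx0.le, ← Real.rpow_neg_one a,
        ← Real.rpow_mul ha.le]
      norm_num
    have e2 : a * (a⁻¹ * x) = x := by field_simp
    have e3 : Real.log (a⁻¹ * x) = -Real.log a + Real.log x := by
      rw [Real.log_mul (by positivity) hx0.ne', Real.log_inv]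
    have e4 : a ^ ((1:ℝ) - c) = a ^ (-(c-1)) := by congr 1; ring
    simp only [hf, e1, e2, e3, e4]
    ring
  have e5 : (1/2) * a⁻¹ * (a ^ ((1:ℝ) - c)) = (1/2) * a ^ (-c) := by
    rw [← Real.rpow_neg_one a, mul_assoc, ← Real.rpow_add ha]
    congr 2; ring
  calc (∫ σ in Ioi (0:ℝ), σ ^ (-((n : ℝ) + 1)) * Real.exp (-s / (2 * σ ^ 2))
        * (t - Real.log σ) ^ 2)
      = (1/2) * ∫ σ in Ioi (0:ℝ), (|(-2:ℝ)| * σ ^ ((-2:ℝ) - 1)) • f (σ ^ (-2:ℝ)) := by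
        rw [stepA, integral_const_mul]
    _ = (1/2) * (a⁻¹ * (a ^ ((1:ℝ) - c) * ∫ u in Ioi (0:ℝ), u ^ (c - 1) * Real.exp (-u) *
          ((t - Real.log a / 2) + Real.log u / 2) ^ 2)) := by rw [stepB, stepC, stepD]
    _ = (1/2) * a ^ (-c) * ∫ u in Ioi (0:ℝ), u ^ (c - 1) * Real.exp (-u) *
          ((t - Real.log a / 2) + Real.log u / 2) ^ 2 := by rw [← mul_assoc, ← mul_assoc, e5]

/-- The invariant MMSD estimate of the standard deviation of a zero-mean Gaussian under
Jeffreys' prior: the function `σ ↦ ∫₀^∞ σ'^{-(n+1)} exp(-s/(2σ'²)) (ln σ - ln σ')² dσ'`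
on `(0, ∞)` attains its minimum at the unique point `σ̂ = √(s/2)·e^{-ψ(n/2)/2}`. -/
theorem mmsd_estimate_gaussian_stddev (n : ℕ) (hn : 0 < n) (s : ℝ) (hs : 0 < s) :
    ∀ σ : ℝ, 0 < σ →
      ((∫ σ' in Set.Ioi (0 : ℝ), σ' ^ (-((n : ℝ) + 1)) * Real.exp (-s / (2 * σ' ^ 2)) *
          (Real.log (Real.sqrt (s / 2) * Real.exp (-digamma ((n : ℝ) / 2) / 2)) -
            Real.log σ') ^ 2) ≤
        ∫ σ' in Set.Ioi (0 : ℝ), σ' ^ (-((n : ℝ) + 1)) * Real.exp (-s / (2 * σ' ^ 2)) *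
          (Real.log σ - Real.log σ') ^ 2) ∧
      ((∫ σ' in Set.Ioi (0 : ℝ), σ' ^ (-((n : ℝ) + 1)) * Real.exp (-s / (2 * σ' ^ 2)) *
          (Real.log σ - Real.log σ') ^ 2) =
        (∫ σ' in Set.Ioi (0 : ℝ), σ' ^ (-((n : ℝ) + 1)) * Real.exp (-s / (2 * σ' ^ 2)) *
          (Real.log (Real.sqrt (s / 2) * Real.exp (-digamma ((n : ℝ) / 2) / 2)) -
            Real.log σ') ^ 2) →
        σ = Real.sqrt (s / 2) * Real.exp (-digamma ((n : ℝ) / 2) / 2)) := by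
  intro σ hσ
  have hn' : (0:ℝ) < (n:ℝ) := by exact_mod_cast hn
  set c : ℝ := (n:ℝ)/2 with hc_def
  have hc : 0 < c := by positivity
  have ha : (0:ℝ) < s/2 := by positivity
  set σh : ℝ := Real.sqrt (s / 2) * Real.exp (-digamma c / 2) with hσh_def
  have hσh : 0 < σh := by positivity
  set G0 : ℝ := ∫ u in Ioi (0:ℝ), u ^ (c-1) * Real.exp (-u) with hG0_def
  set G1 : ℝ := ∫ u in Ioi (0:ℝ), u ^ (c-1) * Real.exp (-u) * Real.log u with hG1_def
  set G2 : ℝ := ∫ u in Ioi (0:ℝ), u ^ (c-1) * Real.exp (-u) * Real.log u ^ 2 with hG2_def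
  have hG0 : G0 = Real.Gamma c := by
    rw [hG0_def, Real.Gamma_eq_integral hc]
    exact setIntegral_congr_fun measurableSet_Ioi fun u hu => mul_comm _ _
  have hG0pos : 0 < G0 := hG0 ▸ Real.Gamma_pos_of_pos hc
  have hG1 : G1 = deriv Real.Gamma c := ((aux_hasDerivAt_Gamma hc).deriv).symm
  have hdig : digamma c = G1 / G0 := by rw [digamma, ← hG1, hG0]
  have hlogσh : Real.log σh = Real.log (s/2) / 2 - digamma c / 2 := by
    rw [hσh_def, Real.log_mul (Real.sqrt_pos.2 ha).ne' (Real.exp_ne_zero _),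
      Real.log_sqrt ha.le, Real.log_exp]
    ring
  have hF : ∀ t : ℝ, (∫ σ' in Ioi (0:ℝ), σ' ^ (-((n : ℝ) + 1)) * Real.exp (-s / (2 * σ' ^ 2)) *
        (t - Real.log σ') ^ 2)
      = (1/2) * (s/2) ^ (-c) * (G0 * (t - Real.log (s/2) / 2)^2
          + G1 * (t - Real.log (s/2) / 2) + G2/4) := by
    intro t
    rw [aux_subst n s hs t, aux_I_eval hc, hG0_def, hG1_def, hG2_def]
  have hG1' : G1 = -(2 * (Real.log σh - Real.log (s/2) / 2)) * G0 := by
    rw [hlogσh, hdig]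
    field_simp
    ring
  have hdiff : (∫ σ' in Ioi (0:ℝ), σ' ^ (-((n : ℝ) + 1)) * Real.exp (-s / (2 * σ' ^ 2)) *
        (Real.log σ - Real.log σ') ^ 2)
      - (∫ σ' in Ioi (0:ℝ), σ' ^ (-((n : ℝ) + 1)) * Real.exp (-s / (2 * σ' ^ 2)) *
        (Real.log σh - Real.log σ') ^ 2)
      = (1/2) * (s/2) ^ (-c) * G0 * (Real.log σ - Real.log σh)^2 := by
    rw [hF (Real.log σ), hF (Real.log σh), hG1']
    ring
  have hKpos : (0:ℝ) < (1/2) * (s/2) ^ (-c) * G0 :=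
    mul_pos (mul_pos (by norm_num) (Real.rpow_pos_of_pos ha _)) hG0pos
  constructor
  · nlinarith [mul_nonneg hKpos.le (sq_nonneg (Real.log σ - Real.log σh))]
  · intro heq
    have h0 : (1/2) * (s/2) ^ (-c) * G0 * (Real.log σ - Real.log σh)^2 = 0 := by
      rw [← hdiff, heq]; ring
    have h1 : (Real.log σ - Real.log σh)^2 = 0 := by
      rcases mul_eq_zero.1 h0 with h | h
      · exact absurd h hKpos.ne'
      · exact h
    have h2 : Real.log σ = Real.log σh := by nlinarith [sq_nonneg (Real.log σ - Real.log σh)]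
    rw [← Real.exp_log hσ, h2, Real.exp_log hσh]
end
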